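/- arXiv:2103.02475 — 2 statements merged into one kernel-verified Lean document; each statement's English description precedes it below -/
import Mathlib

section
/- Let N be a Petri net with basis partition (T_E, T_I) where the T_I-induced subnet is acyclic and conflict-free. For any basis marking M_b with i-maximal marking M_{b,max}, every marking M in the implicit reach R_I(M_b) = {M | ∃σ ∈ T_I*, M_b[σ⟩M} can reach M_{b,max} by firing a sequence of implicit transitions: there exists σ ∈ T_I* with M[σ⟩M_{b,max}. -/
/-- A Petri net with `m` places and `n` transitions. -/
structure PetriNet (m n : ℕ) where
  Pre : Fin m → Fin n → ℕ
  Post : Fin m → Fin n → ℕ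

namespace PetriNet

variable {m n : ℕ}

/-- Incidence matrix `C = Post - Pre`. -/
def C (N : PetriNet m n) (p : Fin m) (t : Fin n) : ℤ :=
  (N.Post p t : ℤ) - (N.Pre p t : ℤ)

/-- Transition `t` is enabled at marking `M`. -/
def enabled (N : PetriNet m n) (M : Fin m → ℕ) (t : Fin n) : Prop :=
  ∀ p, N.Pre p t ≤ M p

/-- Firing transition `t` at marking `M`. -/
def fire (N : PetriNet m n) (M : Fin m → ℕ) (t : Fin n) : Fin m → ℕ :=
  fun p => M p + N.Post p t - N.Pre p t

/-- `fires N M σ M'` : the sequence `σ` is firable at `M` and yields `M'`. -/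
inductive fires (N : PetriNet m n) : (Fin m → ℕ) → List (Fin n) → (Fin m → ℕ) → Prop
  | nil (M : Fin m → ℕ) : fires N M [] M
  | cons {M M' : Fin m → ℕ} {t : Fin n} {σ : List (Fin n)} :
      N.enabled M t → fires N (N.fire M t) σ M' → fires N M (t :: σ) M'

/-- Firing vector of a sequence. -/
def fvec (σ : List (Fin n)) : Fin n → ℕ := fun t => σ.count t

/-- Arcs of the subnet induced by transition set `TI` (full net for `TI = Set.univ`). -/
def arc (N : PetriNet m n) (TI : Set (Fin n)) :
    (Fin m ⊕ Fin n) → (Fin m ⊕ Fin n) → Prop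
  | Sum.inl p, Sum.inr t => t ∈ TI ∧ 0 < N.Pre p t
  | Sum.inr t, Sum.inl p => t ∈ TI ∧ 0 < N.Post p t
  | _, _ => False

/-- The subnet induced by `TI` is acyclic: no directed cycle. -/
def SubnetAcyclic (N : PetriNet m n) (TI : Set (Fin n)) : Prop :=
  ∀ x, ¬ Relation.TransGen (N.arc TI) x x

/-- Transitions in structural conflict. -/
def Tconf (N : PetriNet m n) : Set (Fin n) :=
  {t | ∃ p, 0 < N.Pre p t ∧ ∃ t', t' ≠ t ∧ 0 < N.Pre p t'}

/-- `TI` is non-conflicting: `TI ⊆ T \ T_conf`. -/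
def NonConflicting (N : PetriNet m n) (TI : Set (Fin n)) : Prop :=
  ∀ t ∈ TI, t ∉ N.Tconf

/-- `TI` is non-increasing w.r.t. the GMEC weight vector `w`. -/
def NonIncreasing (N : PetriNet m n) (w : Fin m → ℤ) (TI : Set (Fin n)) : Prop :=
  ∀ t ∈ TI, ∑ p, w p * N.C p t ≤ 0

/-- The `TI`-induced subnet is conflict-free: every place has at most one
output transition among `TI`. -/
def ConflictFreeSubnet (N : PetriNet m n) (TI : Set (Fin n)) : Prop :=
  ∀ p : Fin m, ∀ t ∈ TI, ∀ t' ∈ TI, 0 < N.Pre p t → 0 < N.Pre p t' → t = t'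

/-- `σ` consists only of transitions in `TI`. -/
def ImplicitSeq (TI : Set (Fin n)) (σ : List (Fin n)) : Prop := ∀ t ∈ σ, t ∈ TI

/-- Implicit reach of a marking `Mb`. -/
def RI (N : PetriNet m n) (TI : Set (Fin n)) (Mb : Fin m → ℕ) : Set (Fin m → ℕ) :=
  {M | ∃ σ, ImplicitSeq TI σ ∧ N.fires Mb σ M}

/-- Reachability set. -/
def Reach (N : PetriNet m n) (M0 : Fin m → ℕ) : Set (Fin m → ℕ) :=
  {M | ∃ σ, N.fires M0 σ M}

/-- State equation `M' = M + C·y` (the nonnegativity `M' ≥ 0` is implicit in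
`M' : Fin m → ℕ`). -/
def stateEq (N : PetriNet m n) (M : Fin m → ℕ) (y : Fin n → ℕ) (M' : Fin m → ℕ) : Prop :=
  ∀ p, (M' p : ℤ) = (M p : ℤ) + ∑ t, N.C p t * (y t : ℤ)

/-- `σ` is an explanation of `t` at `M`: an implicit sequence after which `t`
is enabled. -/
def IsExplanation (N : PetriNet m n) (TI : Set (Fin n)) (M : Fin m → ℕ)
    (t : Fin n) (σ : List (Fin n)) : Prop :=
  ImplicitSeq TI σ ∧ ∃ M', N.fires M σ M' ∧ N.enabled M' t

/-- `y` is a minimal explanation vector of `t` at `M`. -/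
def MinExplVec (N : PetriNet m n) (TI : Set (Fin n)) (M : Fin m → ℕ)
    (t : Fin n) (y : Fin n → ℕ) : Prop :=
  (∃ σ, N.IsExplanation TI M t σ ∧ fvec σ = y) ∧
    ∀ σ', N.IsExplanation TI M t σ' → ¬ fvec σ' < y

/-- `y` is the firing vector of some implicit sequence firable at `M`. -/
def FirableVec (N : PetriNet m n) (TI : Set (Fin n)) (M : Fin m → ℕ)
    (y : Fin n → ℕ) : Prop :=
  ∃ σ M', ImplicitSeq TI σ ∧ fvec σ = y ∧ N.fires M σ M'

/-- `y` is a maximal implicit firing vector at `M`. -/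
def MaximalIFV (N : PetriNet m n) (TI : Set (Fin n)) (M : Fin m → ℕ)
    (y : Fin n → ℕ) : Prop :=
  N.FirableVec TI M y ∧ ∀ y', N.FirableVec TI M y' → ¬ y < y'

/-- `y` is the maximal implicit firing vector at `M`, dominating all others. -/
def GreatestIFV (N : PetriNet m n) (TI : Set (Fin n)) (M : Fin m → ℕ)
    (y : Fin n → ℕ) : Prop :=
  N.FirableVec TI M y ∧ ∀ y', N.FirableVec TI M y' → y' ≤ y

/-- One step of the BRG: fire a minimal explanation followed by an explicit
transition `t ∉ TI`. -/
def BRGstep (N : PetriNet m n) (TI : Set (Fin n)) (M1 M2 : Fin m → ℕ) : Prop :=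
  ∃ t ∉ TI, ∃ y, N.MinExplVec TI M1 t y ∧
    ∀ p, (M2 p : ℤ) = (M1 p : ℤ) + (∑ s, N.C p s * (y s : ℤ)) + N.C p t

/-- `Mb` is a basis marking of the BRG with initial marking `M0`. -/
def Basis (N : PetriNet m n) (TI : Set (Fin n)) (M0 Mb : Fin m → ℕ) : Prop :=
  Relation.ReflTransGen (N.BRGstep TI) M0 Mb

/-- A marking is dead if it enables no transition. -/
def Dead (N : PetriNet m n) (M : Fin m → ℕ) : Prop := ∀ t, ¬ N.enabled M t

/-- Final markings of the GMEC `(w, k)`. -/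
def Final (w : Fin m → ℤ) (k : ℤ) (M : Fin m → ℕ) : Prop :=
  ∑ p, w p * (M p : ℤ) ≤ k

/-- The plant is non-blocking. -/
def NonBlocking (N : PetriNet m n) (M0 : Fin m → ℕ) (w : Fin m → ℤ) (k : ℤ) : Prop :=
  ∀ M ∈ N.Reach M0, ∃ M' ∈ N.Reach M, Final w k M'

/-- Boundedness of the marked net. -/
def Bounded (N : PetriNet m n) (M0 : Fin m → ℕ) : Prop :=
  ∃ K, ∀ M ∈ N.Reach M0, ∀ p, M p ≤ K

end PetriNet

/-!
Implicit transitions of a conflict-free subnet are persistent: firing one implicit transition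
never disables another, and two enabled ones commute. By the resulting residue theorem
(Keller), if `σ` and `σmax` are implicit sequences firable at `Mb`, the residue `σmax ∸ σ`
is still firable after `σ`. Maximality of `ymax` gives `fvec σ ≤ ymax`, so `σ (σmax ∸ σ)` has
firing vector `ymax`, and the state equation forces it to end in `Mbmax`.
-/

namespace PetriNet

variable {m n : ℕ} {N : PetriNet m n} {TI : Set (Fin n)}

theorem fires.append {M M₁ M₂ : Fin m → ℕ} {u v : List (Fin n)}
    (hu : N.fires M u M₁) (hv : N.fires M₁ v M₂) : N.fires M (u ++ v) M₂ := by
  induction hu with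
  | nil => exact hv
  | cons he _ ih => exact fires.cons he (ih hv)

theorem cast_fire_of_enabled {M : Fin m → ℕ} {t : Fin n} (h : N.enabled M t) (p : Fin m) :
    (N.fire M t p : ℤ) = M p + N.C p t := by
  have := h p
  simp only [fire, C]
  omega

theorem fire_comm_of_enabled {M : Fin m → ℕ} {s t : Fin n}
    (hs : N.enabled M s) (ht : N.enabled M t)
    (hst : N.enabled (N.fire M s) t) (hts : N.enabled (N.fire M t) s) :
    N.fire (N.fire M s) t = N.fire (N.fire M t) s := by
  funext p
  have h := cast_fire_of_enabled hst p
  rw [cast_fire_of_enabled hs] at h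
  have h' := cast_fire_of_enabled hts p
  rw [cast_fire_of_enabled ht] at h'
  omega

theorem fires.stateEq {M M' : Fin m → ℕ} {σ : List (Fin n)} (h : N.fires M σ M') :
    N.stateEq M (fvec σ) M' := by
  induction h with
  | nil => simp [PetriNet.stateEq, fvec]
  | @cons M M' t σ he _ ih =>
    intro p
    rw [ih p, cast_fire_of_enabled he]
    simp only [fvec, List.count_cons, beq_iff_eq, Nat.cast_add, Nat.cast_ite, Nat.cast_one,
      Nat.cast_zero, mul_add, Finset.sum_add_distrib, mul_ite, mul_one, mul_zero,
      Finset.sum_ite_eq, Finset.mem_univ, if_true]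
    ring

theorem stateEq.unique {M M₁ M₂ : Fin m → ℕ} {y : Fin n → ℕ}
    (h₁ : N.stateEq M y M₁) (h₂ : N.stateEq M y M₂) : M₁ = M₂ :=
  funext fun p => by exact_mod_cast (h₁ p).trans (h₂ p).symm

theorem fvec_append (u v : List (Fin n)) : fvec (u ++ v) = fvec u + fvec v :=
  funext fun _ => List.count_append ..

theorem fvec_diff (u v : List (Fin n)) : fvec (v.diff u) = fvec v - fvec u :=
  funext fun t => List.count_diff t v u

theorem ImplicitSeq.sublist {u v : List (Fin n)} (hv : ImplicitSeq TI v) (huv : u.Sublist v) :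
    ImplicitSeq TI u :=
  fun t ht => hv t (huv.mem ht)

theorem implicitSeq_cons {t : Fin n} {σ : List (Fin n)} :
    ImplicitSeq TI (t :: σ) ↔ t ∈ TI ∧ ImplicitSeq TI σ :=
  List.forall_mem_cons

namespace ConflictFreeSubnet

variable (hcf : N.ConflictFreeSubnet TI)
include hcf

theorem enabled_fire {M : Fin m → ℕ} {s t : Fin n} (hs : s ∈ TI) (ht : t ∈ TI) (hne : s ≠ t)
    (het : N.enabled M t) : N.enabled (N.fire M s) t := by
  intro p
  obtain h | h := Nat.eq_zero_or_pos (N.Pre p t)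
  · simp [h]
  have hps : N.Pre p s = 0 := Nat.eq_zero_of_not_pos fun hps => hne (hcf p s hs t ht hps h)
  have := het p
  simp only [fire]
  omega

theorem exists_fires_erase {t : Fin n} (ht : t ∈ TI) {v : List (Fin n)} (hv : ImplicitSeq TI v)
    {M M' : Fin m → ℕ} (het : N.enabled M t) (hf : N.fires M v M') :
    ∃ M'', N.fires (N.fire M t) (v.erase t) M'' := by
  induction hf with
  | nil => exact ⟨_, fires.nil _⟩
  | @cons M M' s v hes hf ih =>
    obtain ⟨hs, hv⟩ := implicitSeq_cons.1 hv
    obtain rfl | hne := eq_or_ne s t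
    · exact ⟨M', by simpa using hf⟩
    obtain ⟨M'', h⟩ := ih hv (hcf.enabled_fire hs ht hne het)
    have hts := hcf.enabled_fire ht hs hne.symm hes
    rw [fire_comm_of_enabled hes het (hcf.enabled_fire hs ht hne het) hts] at h
    exact ⟨M'', by simpa [List.erase_cons, hne] using fires.cons hts h⟩

theorem exists_fires_diff {u v : List (Fin n)} (hu : ImplicitSeq TI u) (hv : ImplicitSeq TI v)
    {M Mu Mv : Fin m → ℕ} (hfu : N.fires M u Mu) (hfv : N.fires M v Mv) :
    ∃ M', N.fires Mu (v.diff u) M' := by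
  induction hfu generalizing v Mv with
  | nil => exact ⟨Mv, hfv⟩
  | @cons M Mu t u het _ ih =>
    obtain ⟨ht, hu⟩ := implicitSeq_cons.1 hu
    obtain ⟨M', hf⟩ := hcf.exists_fires_erase ht hv het hfv
    simpa [List.diff_cons] using ih hu (hv.sublist List.erase_sublist) hf

end ConflictFreeSubnet

end PetriNet

open PetriNet

theorem imax_reachable_from_implicit_reach_general {m n : ℕ} (N : PetriNet m n)
    (TI : Set (Fin n))
    (hcf : N.ConflictFreeSubnet TI)
    (Mb Mbmax : Fin m → ℕ) (ymax : Fin n → ℕ)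
    (hmax : N.GreatestIFV TI Mb ymax)
    (hreach : ∃ σ, ImplicitSeq TI σ ∧ fvec σ = ymax ∧ N.fires Mb σ Mbmax) :
    ∀ M ∈ N.RI TI Mb, ∃ σ : List (Fin n), ImplicitSeq TI σ ∧ N.fires M σ Mbmax := by
  obtain ⟨σmax, hσmax, rfl, hfmax⟩ := hreach
  rintro M ⟨σ, hσ, hf⟩
  obtain ⟨M', hres⟩ := hcf.exists_fires_diff hσ hσmax hf hfmax
  have hle : fvec σ ≤ fvec σmax := hmax.2 _ ⟨σ, M, hσ, rfl, hf⟩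
  have hvec : fvec (σ ++ σmax.diff σ) = fvec σmax := by
    rw [fvec_append, fvec_diff, add_tsub_cancel_of_le hle]
  have hM' : M' = Mbmax := (hvec ▸ (hf.append hres).stateEq).unique hfmax.stateEq
  exact ⟨σmax.diff σ, hσmax.sublist (List.diff_sublist _ _), hM' ▸ hres⟩

/-- every marking in the implicit reach of `M_b` can reach the
i-maximal marking `M_{b,max}` by firing implicit transitions only. -/
theorem imax_reachable_from_implicit_reach {m n : ℕ} (N : PetriNet m n)
    (TI : Set (Fin n))
    (hacyc : N.SubnetAcyclic TI) (hcf : N.ConflictFreeSubnet TI)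
    (Mb Mbmax : Fin m → ℕ) (ymax : Fin n → ℕ)
    (hmax : N.GreatestIFV TI Mb ymax)
    (hreach : ∃ σ, ImplicitSeq TI σ ∧ fvec σ = ymax ∧ N.fires Mb σ Mbmax) :
    ∀ M ∈ N.RI TI Mb, ∃ σ : List (Fin n), ImplicitSeq TI σ ∧ N.fires M σ Mbmax :=
  imax_reachable_from_implicit_reach_general N TI hcf Mb Mbmax ymax hmax hreach
end

section
/- If the maximal implicit firing vector y_max at M_b dominates the firing vector y of every marking M = M_b + C_I·y ∈ R_I(M_b), and w^T·C_I(·, t) ≤ 0 for every implicit transition t, then w^T·M ≥ w^T·M_{b,max} for every M ∈ R_I(M_b); hence if w^T·M_{b,max} > k, then no marking in R_I(M_b) satisfies w^T·M ≤ k. -/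
open PetriNet

lemma fires_state {m n : ℕ} (N : PetriNet m n) {M M' : Fin m → ℕ} {σ : List (Fin n)}
    (h : N.fires M σ M') :
    ∀ p, (M' p : ℤ) = (M p : ℤ) + ∑ t, N.C p t * (fvec σ t : ℤ) := by
  induction h with
  | nil M => simp [fvec]
  | @cons M M' t σ henab hf ih =>
    intro p
    have hfire : ((N.fire M t) p : ℤ) = (M p : ℤ) + N.C p t := by
      unfold PetriNet.fire PetriNet.C
      have h1 := henab p
      have h2 : N.Pre p t ≤ M p + N.Post p t := le_trans h1 (Nat.le_add_right _ _)
      push_cast [Nat.cast_sub h2]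
      ring
    have hcount : ∀ s : Fin n, (fvec (t :: σ) s : ℤ) = (fvec σ s : ℤ) + if s = t then 1 else 0 := by
      intro s
      rcases eq_or_ne s t with h | h
      · subst h; simp [fvec, List.count_cons]
      · simp [fvec, List.count_cons, h, h.symm]
    rw [ih p, hfire]
    simp only [hcount, mul_add, Finset.sum_add_distrib, mul_ite, mul_one, mul_zero,
      Finset.sum_ite_eq', Finset.mem_univ, if_true]
    ring

/-- if `y_max` dominates the firing vector of every implicit
sequence firable from `M_b`, and the columns of `C_I` (the implicit
transitions) have nonpositive weighted column sums, then `w^T·M ≥ w^T·M_{b,max}`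
for every `M ∈ R_I(M_b)`; hence if `w^T·M_{b,max} > k` no marking in
`R_I(M_b)` satisfies `w^T·M ≤ k`. -/
theorem imax_minimizes_token_count {m n : ℕ} (N : PetriNet m n)
    (TI : Set (Fin n)) (w : Fin m → ℤ) (k : ℤ)
    (Mb Mbmax : Fin m → ℕ) (ymax : Fin n → ℕ)
    (hsupp : ∀ t ∉ TI, ymax t = 0)
    (hdom : ∀ (σ : List (Fin n)) (M : Fin m → ℕ),
      ImplicitSeq TI σ → N.fires Mb σ M → fvec σ ≤ ymax)
    (hstate : N.stateEq Mb ymax Mbmax)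
    (hneg : ∀ t ∈ TI, ∑ p, w p * N.C p t ≤ 0) :
    (∀ M ∈ N.RI TI Mb, ∑ p, w p * (Mbmax p : ℤ) ≤ ∑ p, w p * (M p : ℤ)) ∧
    (k < ∑ p, w p * (Mbmax p : ℤ) → ∀ M ∈ N.RI TI Mb, ¬ Final w k M) := by
  have key : ∀ M ∈ N.RI TI Mb, ∑ p, w p * ((Mbmax p : ℤ)) ≤ ∑ p, w p * (M p : ℤ) := by
    intro M hM
    obtain ⟨σ, hσ, hf⟩ := hM
    have hMst := fires_state N hf
    have hswap : ∀ (y : Fin n → ℕ),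
        ∑ p, w p * ((Mb p : ℤ) + ∑ t, N.C p t * (y t : ℤ)) =
        ∑ p, w p * (Mb p : ℤ) + ∑ t, (∑ p, w p * N.C p t) * (y t : ℤ) := by
      intro y
      simp only [mul_add, Finset.sum_add_distrib, Finset.mul_sum]
      congr 1
      rw [Finset.sum_comm]
      refine Finset.sum_congr rfl fun t _ => ?_
      rw [Finset.sum_mul]
      exact Finset.sum_congr rfl fun p _ => by ring
    have h1 : ∑ p, w p * (Mbmax p : ℤ) =
        ∑ p, w p * (Mb p : ℤ) + ∑ t, (∑ p, w p * N.C p t) * (ymax t : ℤ) := by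
      rw [← hswap ymax]
      exact Finset.sum_congr rfl fun p _ => by rw [hstate p]
    have h2 : ∑ p, w p * (M p : ℤ) =
        ∑ p, w p * (Mb p : ℤ) + ∑ t, (∑ p, w p * N.C p t) * (fvec σ t : ℤ) := by
      rw [← hswap (fvec σ)]
      exact Finset.sum_congr rfl fun p _ => by rw [hMst p]
    have hy := hdom σ M hσ hf
    have hterm : ∑ t, (∑ p, w p * N.C p t) * ((ymax t : ℤ) - (fvec σ t : ℤ)) ≤ 0 := by
      apply Finset.sum_nonpos
      intro t _
      by_cases ht : t ∈ TI
      · exact mul_nonpos_iff.mpr (Or.inr ⟨hneg t ht, by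
          have hle : fvec σ t ≤ ymax t := hy t
          omega⟩)
      · have h0 : ymax t = 0 := hsupp t ht
        have h0' : fvec σ t = 0 := by
          simp only [fvec, List.count_eq_zero]
          intro hmem
          exact ht (hσ t hmem)
        simp [h0, h0']
    have hdiff : ∑ p, w p * (Mbmax p : ℤ) - ∑ p, w p * (M p : ℤ) ≤ 0 := by
      rw [h1, h2]
      have : ∑ t, (∑ p, w p * N.C p t) * ((ymax t : ℤ) - (fvec σ t : ℤ)) =
          ∑ t, (∑ p, w p * N.C p t) * (ymax t : ℤ) -
          ∑ t, (∑ p, w p * N.C p t) * (fvec σ t : ℤ) := by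
        rw [← Finset.sum_sub_distrib]
        exact Finset.sum_congr rfl fun t _ => by ring
      linarith [this ▸ hterm]
    linarith
  refine ⟨key, ?_⟩
  intro hk M hM hfin
  have := key M hM
  exact absurd hfin (by unfold PetriNet.Final; linarith)
end
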